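/- Let A be a 2×2 integer matrix and let r ∈ ℤ divide trace(A)² − det(A). Let Λ be the ℤ-submodule of the 2×2 integer matrices spanned by A and r·E, where E is the identity matrix. Then Λ is stable under the pairing S₄(X,Y) = adj(X·Y): for all X, Y ∈ Λ, the matrix adj(X·Y) lies in Λ. -/
import Mathlib

theorem adj_fin_two_eq (M : Matrix (Fin 2) (Fin 2) ℤ) :
    M.adjugate = M.trace • (1 : Matrix (Fin 2) (Fin 2) ℤ) - M := by
  ext i j
  fin_cases i <;> fin_cases j <;>
    simp [Matrix.adjugate_fin_two, Matrix.trace_fin_two, Matrix.sub_apply,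
      Matrix.smul_apply, Matrix.one_apply, ← Matrix.diagonal_intCast,
      Matrix.diagonal_apply]

theorem ch_fin_two (A : Matrix (Fin 2) (Fin 2) ℤ) :
    A * A = A.trace • A - A.det • (1 : Matrix (Fin 2) (Fin 2) ℤ) := by
  ext i j
  fin_cases i <;> fin_cases j <;>
    (simp [Matrix.mul_apply, Fin.sum_univ_two, Matrix.trace_fin_two,
      Matrix.det_fin_two, Matrix.sub_apply, Matrix.smul_apply, Matrix.one_apply,
      ← Matrix.diagonal_intCast, Matrix.diagonal_apply]; ring)

/-- If `A` is an integer `2×2` matrix and `r` divides `(tr A)² − det A`, then the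
ℤ-span of `A` and `r·E` in `Mat₂(ℤ)` is stable under the pairing
`S₄(X,Y) = adj(X·Y)`. -/
theorem stmt15 (A : Matrix (Fin 2) (Fin 2) ℤ) (r : ℤ)
    (hr : r ∣ A.trace ^ 2 - A.det)
    (Λ : Submodule ℤ (Matrix (Fin 2) (Fin 2) ℤ))
    (hΛ : Λ = Submodule.span ℤ {A, r • (1 : Matrix (Fin 2) (Fin 2) ℤ)}) :
    ∀ X ∈ Λ, ∀ Y ∈ Λ, (X * Y).adjugate ∈ Λ := by
  obtain ⟨k, hk⟩ := hr
  subst hΛ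
  intro X hX Y hY
  rw [Submodule.mem_span_pair] at hX hY ⊢
  obtain ⟨a, b, rfl⟩ := hX
  obtain ⟨c, d, rfl⟩ := hY
  refine ⟨-(a*c*A.trace + (a*d+b*c)*r), a*c*k + (a*d+b*c)*A.trace + b*d*r, ?_⟩
  have hprod : (a•A + b•(r•(1 : Matrix (Fin 2) (Fin 2) ℤ))) *
      (c•A + d•(r•(1 : Matrix (Fin 2) (Fin 2) ℤ)))
      = (a*c*A.trace + (a*d+b*c)*r) • A
        + (b*d*r^2 - a*c*A.det) • (1 : Matrix (Fin 2) (Fin 2) ℤ) := by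
    simp only [add_mul, mul_add, smul_mul_assoc, mul_smul_comm, mul_one, one_mul,
      smul_smul, ch_fin_two A]
    module
  rw [adj_fin_two_eq, hprod]
  simp only [Matrix.trace_add, Matrix.trace_smul, Matrix.trace_one]
  match_scalars
  · ring
  · simp only [smul_eq_mul, Fintype.card_fin, Nat.cast_ofNat]
    linear_combination (-(a*c)) * hk
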